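/- For real b, the discriminant 𝒟_m(b) has no real roots; equivalently, for every real b the characteristic polynomial D_m(λ, b) has m+1 distinct roots. -/

import Mathlib

open Polynomial

noncomputable def Mmat (m : ℕ) (b : ℂ) : Matrix (Fin (m + 1)) (Fin (m + 1)) ℂ :=
  Matrix.of fun i j =>
    if (i : ℕ) = (j : ℕ) then (4 * ((i : ℕ) : ℂ) + 1) * b
    else if (i : ℕ) = (j : ℕ) + 1 then -((2 * ((i : ℕ) : ℂ) - 1) * (2 * ((i : ℕ) : ℂ)))
    else if (j : ℕ) = (i : ℕ) + 1 then 4 * ((i : ℕ) : ℂ) - 4 * (m : ℂ)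
    else 0

noncomputable def discD (m : ℕ) (b : ℂ) : ℂ :=
  (((Mmat m b).charpoly.roots).map fun r => ((Mmat m b).charpoly.derivative).eval r).prod

/-!
Since the products of opposite off-diagonal entries are positive, conjugation by a positive
diagonal matrix turns the real matrix `M_m(b)` into a symmetric one, so `M_m(b)` is diagonalizable.
Its superdiagonal entries `4i - 4m` (`i < m`) do not vanish, so an eigenvector is determined by its
first coordinate and every eigenspace is a line. A diagonalizable matrix whose eigenspaces are lines
has pairwise distinct eigenvalues, i.e. a separable characteristic polynomial.
-/

open Matrix

namespace Matrix

variable {n K : Type*} [Fintype n] [DecidableEq n]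

theorem charpoly_eq_of_mul_eq_mul [CommRing K] {M N P : Matrix n n K} (hP : IsUnit P)
    (h : M * P = P * N) : M.charpoly = N.charpoly := by
  have hM : M = hP.unit.val * N * hP.unit.val⁻¹ := by
    rw [IsUnit.unit_spec, ← h, Matrix.mul_assoc,
      mul_nonsing_inv P ((isUnit_iff_isUnit_det P).mp hP), Matrix.mul_one]
  rw [hM, charpoly_units_conj]

theorem injective_of_mul_eq_mul_diagonal [Field K] {M P : Matrix n n K} {d : n → K}
    (hP : IsUnit P) (hMP : M * P = P * diagonal d) (i₀ : n)
    (hM : ∀ (μ : K) (v : n → K), M *ᵥ v = μ • v → v i₀ = 0 → v = 0) :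
    Function.Injective d := by
  have hPinj : Function.Injective (P *ᵥ ·) := mulVec_injective_iff_isUnit.mpr hP
  have heig : ∀ k, M *ᵥ (P *ᵥ Pi.single k 1) = d k • (P *ᵥ Pi.single k 1) := fun k => by
    rw [mulVec_mulVec, hMP, ← mulVec_mulVec, diagonal_mulVec_single, mul_one, ← mulVec_smul,
      ← Pi.single_smul', smul_eq_mul, mul_one]
  set col : n → n → K := fun k => P *ᵥ Pi.single k 1
  have hcol : ∀ k, col k i₀ ≠ 0 := fun k h0 => by
    have := hPinj ((hM _ _ (heig k) h0).trans (mulVec_zero P).symm)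
    simpa using congrFun this k
  intro i j hij
  by_contra hne
  have hw : col j i₀ • col i - col i i₀ • col j = 0 := by
    refine hM (d i) _ ?_ (by simp [mul_comm])
    rw [mulVec_sub, mulVec_smul, mulVec_smul, heig, heig, hij, smul_sub, smul_comm (col j i₀),
      smul_comm (col i i₀)]
  have : col j i₀ • (Pi.single i 1 : n → K) - col i i₀ • Pi.single j 1 = 0 := by
    apply hPinj
    simp only [mulVec_sub, mulVec_smul, mulVec_zero]
    exact hw
  simpa [Pi.single_apply, Ne.symm hne, hcol j] using congrFun this i

theorem separable_charpoly_of_mul_eq_mul_diagonal [Field K] {M P : Matrix n n K} {d : n → K}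
    (hP : IsUnit P) (hMP : M * P = P * diagonal d) (i₀ : n)
    (hM : ∀ (μ : K) (v : n → K), M *ᵥ v = μ • v → v i₀ = 0 → v = 0) :
    M.charpoly.Separable := by
  rw [charpoly_eq_of_mul_eq_mul hP hMP, charpoly_diagonal]
  exact separable_prod_X_sub_C_iff.mpr (injective_of_mul_eq_mul_diagonal hP hMP i₀ hM)

theorem IsHermitian.exists_mul_eq_mul_diagonal {𝕜 : Type*} [RCLike 𝕜] {A : Matrix n n 𝕜}
    (hA : A.IsHermitian) :
    ∃ (U : Matrix n n 𝕜) (d : n → 𝕜), IsUnit U ∧ A * U = U * diagonal d := by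
  refine ⟨hA.eigenvectorUnitary, RCLike.ofReal ∘ hA.eigenvalues,
    (Unitary.toUnits hA.eigenvectorUnitary).isUnit, ?_⟩
  have h := hA.spectral_theorem
  rw [Unitary.conjStarAlgAut_apply] at h
  nth_rw 1 [h]
  rw [Matrix.mul_assoc, Unitary.coe_star_mul_self, Matrix.mul_one]

end Matrix

theorem Polynomial.prod_eval_derivative_roots_ne_zero {R : Type*} [CommRing R] [IsDomain R]
    {p : R[X]} (hp : p.Separable) : (p.roots.map fun r => p.derivative.eval r).prod ≠ 0 := by
  refine Multiset.prod_ne_zero fun h => ?_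
  obtain ⟨r, hr, hr0⟩ := Multiset.mem_map.mp h
  exact hp.eval₂_derivative_ne_zero (RingHom.id R) (isRoot_of_mem_roots hr) hr0

/-- Row `i` has `d i` on the diagonal, `l i` left of it and `u i` right of it. -/
def tridiagonal {R : Type*} [Zero R] (n : ℕ) (d l u : ℕ → R) :
    Matrix (Fin (n + 1)) (Fin (n + 1)) R :=
  Matrix.of fun i j =>
    if (i : ℕ) = j then d i else if (i : ℕ) = j + 1 then l i else if (j : ℕ) = i + 1 then u i else 0

section Tridiagonal

variable {R : Type*} {n : ℕ} {d l u : ℕ → R} {i j : Fin (n + 1)}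

theorem tridiagonal_apply_of_eq_succ [Zero R] (h : (j : ℕ) = i + 1) :
    tridiagonal n d l u i j = u i := by
  simp only [tridiagonal, of_apply]
  rw [if_neg (by omega), if_neg (by omega), if_pos h]

theorem tridiagonal_apply_of_succ_eq [Zero R] (h : (i : ℕ) = j + 1) :
    tridiagonal n d l u i j = l i := by
  simp [tridiagonal, h]

theorem tridiagonal_apply_eq_zero [Zero R] (h : (i : ℕ) + 1 < j ∨ (j : ℕ) + 1 < i) :
    tridiagonal n d l u i j = 0 := by
  simp only [tridiagonal, of_apply]
  rw [if_neg (by omega), if_neg (by omega), if_neg (by omega)]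

theorem tridiagonal_eq_zero_of_mulVec_eq_smul [Field R] (hu : ∀ k < n, u k ≠ 0) {μ : R}
    {v : Fin (n + 1) → R} (hv : tridiagonal n d l u *ᵥ v = μ • v) (h0 : v 0 = 0) : v = 0 := by
  suffices h : ∀ k ≤ n, ∀ j : Fin (n + 1), (j : ℕ) ≤ k → v j = 0 from
    funext fun j => h n le_rfl j j.is_le
  intro k
  induction k with
  | zero => exact fun _ j hj => (Fin.ext (Nat.le_zero.mp hj) : j = 0) ▸ h0
  | succ k ih =>
    intro hk j hj
    rcases Nat.lt_or_eq_of_le hj with hj | hj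
    · exact ih (by omega) j (by omega)
    -- row `k` of the eigenvalue equation only involves `v (k - 1)`, `v k` and `v (k + 1)`
    have hrow := congrFun hv ⟨k, by omega⟩
    rw [mulVec, dotProduct, Finset.sum_eq_single j] at hrow
    · rw [tridiagonal_apply_of_eq_succ hj, Pi.smul_apply, ih (by omega) ⟨k, by omega⟩ le_rfl,
        smul_zero] at hrow
      exact (mul_eq_zero.mp hrow).resolve_left (hu k (by omega))
    · intro i _ hij
      rcases le_or_gt (i : ℕ) k with hik | hik
      · rw [ih (by omega) i hik, mul_zero]
      · rw [tridiagonal_apply_eq_zero (Or.inl (by simp only; omega)), zero_mul]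
    · simp

end Tridiagonal

/-- Conjugation by `diagonal s` multiplies entry `(i, j)` by `s i / s j`; this choice of `s` makes
the conjugated entries at `(k, k + 1)` and `(k + 1, k)` equal. -/
noncomputable def tridiagonalSymmetrizer (l u : ℕ → ℝ) : ℕ → ℝ
  | 0 => 1
  | k + 1 => tridiagonalSymmetrizer l u k * √(u k / l (k + 1))

section Symmetrizer

variable {n : ℕ} {l u : ℕ → ℝ}

theorem tridiagonalSymmetrizer_pos (hlu : ∀ k < n, 0 < l (k + 1) * u k) :
    ∀ k ≤ n, 0 < tridiagonalSymmetrizer l u k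
  | 0, _ => one_pos
  | k + 1, hk => by
    have hk' : 0 < u k / l (k + 1) :=
      div_pos_iff.mpr ((pos_and_pos_or_neg_and_neg_of_mul_pos (hlu k hk)).imp And.symm And.symm)
    exact mul_pos (tridiagonalSymmetrizer_pos hlu k (by omega)) (Real.sqrt_pos.mpr hk')

theorem tridiagonalSymmetrizer_sq_mul {k : ℕ} (hk : 0 < l (k + 1) * u k) :
    tridiagonalSymmetrizer l u (k + 1) ^ 2 * l (k + 1) =
      tridiagonalSymmetrizer l u k ^ 2 * u k := by
  have hl : l (k + 1) ≠ 0 := left_ne_zero_of_mul hk.ne'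
  have hk' : 0 ≤ u k / l (k + 1) :=
    (div_pos_iff.mpr ((pos_and_pos_or_neg_and_neg_of_mul_pos hk).imp And.symm And.symm)).le
  rw [tridiagonalSymmetrizer, mul_pow, Real.sq_sqrt hk']
  field_simp

theorem isHermitian_diagonal_mul_tridiagonal_mul_diagonal (d : ℕ → ℝ)
    (hlu : ∀ k < n, 0 < l (k + 1) * u k) :
    (diagonal (fun i : Fin (n + 1) => tridiagonalSymmetrizer l u i) * tridiagonal n d l u *
      diagonal (fun i : Fin (n + 1) => (tridiagonalSymmetrizer l u i)⁻¹)).IsHermitian := by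
  refine IsHermitian.ext fun i j => ?_
  simp only [star_trivial, mul_diagonal, diagonal_mul]
  wlog hij : (i : ℕ) ≤ j generalizing i j
  · exact (this j i (by omega)).symm
  rcases Nat.lt_or_eq_of_le hij with hij | hij
  · rcases Nat.lt_or_eq_of_le (Nat.succ_le_of_lt hij) with hij | hij
    · rw [tridiagonal_apply_eq_zero (Or.inl hij), tridiagonal_apply_eq_zero (Or.inr hij)]
      simp
    · rw [tridiagonal_apply_of_eq_succ hij.symm, tridiagonal_apply_of_succ_eq hij.symm, ← hij]
      have hs := tridiagonalSymmetrizer_pos hlu i (by omega)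
      have hs' := tridiagonalSymmetrizer_pos hlu (i + 1) (by omega)
      have := tridiagonalSymmetrizer_sq_mul (hlu i (by omega))
      field_simp
      linear_combination this
  · rw [Fin.ext hij]

theorem separable_charpoly_tridiagonal (d : ℕ → ℝ) (hlu : ∀ k < n, 0 < l (k + 1) * u k) :
    (tridiagonal n d l u).charpoly.Separable := by
  obtain ⟨U, ev, hU, hSU⟩ :=
    (isHermitian_diagonal_mul_tridiagonal_mul_diagonal d hlu).exists_mul_eq_mul_diagonal
  set s : Fin (n + 1) → ℝ := fun i => tridiagonalSymmetrizer l u i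
  have hs : ∀ i, s i ≠ 0 := fun i => (tridiagonalSymmetrizer_pos hlu i i.is_le).ne'
  have hss : diagonal (fun i => (s i)⁻¹) * diagonal s = 1 := by
    rw [diagonal_mul_diagonal, ← diagonal_one]
    exact congrArg diagonal (funext fun i => inv_mul_cancel₀ (hs i))
  have hP : IsUnit (diagonal (fun i => (s i)⁻¹) * U) :=
    (isUnit_diagonal.mpr (Pi.isUnit_iff.mpr fun i => (inv_ne_zero (hs i)).isUnit)).mul hU
  have hTP : tridiagonal n d l u * (diagonal (fun i => (s i)⁻¹) * U) =
      diagonal (fun i => (s i)⁻¹) * U * diagonal ev :=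
    calc tridiagonal n d l u * (diagonal (fun i => (s i)⁻¹) * U)
        = diagonal (fun i => (s i)⁻¹) *
            (diagonal s * tridiagonal n d l u * diagonal (fun i => (s i)⁻¹)) * U := by
          simp only [Matrix.mul_assoc, ← Matrix.mul_assoc _ (diagonal s), hss, Matrix.one_mul]
      _ = diagonal (fun i => (s i)⁻¹) * U * diagonal ev := by
          rw [Matrix.mul_assoc, hSU, Matrix.mul_assoc]
  exact separable_charpoly_of_mul_eq_mul_diagonal hP hTP 0 fun μ v hv h0 =>
    tridiagonal_eq_zero_of_mulVec_eq_smul (fun k hk => right_ne_zero_of_mul (hlu k hk).ne') hv h0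

end Symmetrizer

theorem Mmat_ofReal (m : ℕ) (b : ℝ) :
    Mmat m b = (tridiagonal m (fun i => (4 * i + 1) * b) (fun i => -((2 * i - 1) * (2 * i)))
      (fun i => 4 * i - 4 * m)).map Complex.ofRealHom := by
  ext i j
  simp only [Mmat, tridiagonal, map_apply, of_apply, Complex.ofRealHom_eq_coe]
  split_ifs <;> push_cast <;> rfl

/-- for real b the discriminant 𝒟_m(b) does not vanish; equivalently,
D_m(λ,b) has m+1 distinct roots. -/
theorem stmt9 (m : ℕ) (b : ℝ) :
    discD m (b : ℂ) ≠ 0 ∧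
    ((Mmat m (b : ℂ)).charpoly.roots).toFinset.card = m + 1 := by
  have hlu : ∀ i < m, (0 : ℝ) <
      -((2 * ((i + 1 : ℕ) : ℝ) - 1) * (2 * ((i + 1 : ℕ) : ℝ))) * (4 * (i : ℝ) - 4 * m) := by
    intro i hi
    have hm : (i : ℝ) + 1 ≤ m := by exact_mod_cast hi
    have h : 0 < (2 * (i : ℝ) + 1) * (2 * i + 2) * (4 * (m - i)) :=
      mul_pos (by positivity) (by linarith)
    push_cast
    linear_combination h
  have hsep : (Mmat m b).charpoly.Separable := by
    rw [Mmat_ofReal, charpoly_map]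
    exact (separable_charpoly_tridiagonal _ hlu).map
  refine ⟨prod_eval_derivative_roots_ne_zero hsep, ?_⟩
  rw [Multiset.toFinset_card_of_nodup (nodup_roots hsep), IsAlgClosed.card_roots_eq_natDegree,
    charpoly_natDegree_eq_dim, Fintype.card_fin]
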